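/- For f(x,y) = (y − x², x − y²), the formal inverse branches are given by w_{m,n}(x₀,y₀) = (x₀ + (−1)^m √(x₀² − y₀), y₀ + (−1)^n √(y₀² − x₀)) for m,n ∈ {0,1}: whenever x₀² ≥ y₀ and y₀² ≥ x₀ and 4xy ≠ 1 at the resulting point (x,y) = w_{m,n}(x₀,y₀), we have N_f(x,y) = (x₀,y₀). -/

import Mathlib

/-!
Where the Jacobian `L` of `f` at `z` is injective, `N_f(z) = p` is the linear equation
`L (z - p) = f z`. For `f(x, y) = (y - x², x - y²)` and `z = (x, y)`, `p = (x₀, y₀)` its two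
components read `y₀ = 2 x x₀ - x²` and `x₀ = 2 y y₀ - y²`, i.e. `(x - x₀)² = x₀² - y₀` and
`(y - y₀)² = y₀² - x₀`, which is exactly what the branches `w_{m,n}` satisfy.
-/

open ContinuousLinearMap Function

/-- Newton map on the plane. -/
noncomputable def newton2 (f : ℝ × ℝ → ℝ × ℝ) (x : ℝ × ℝ) : ℝ × ℝ :=
  x - (fderiv ℝ f x).inverse (f x)

theorem ContinuousLinearMap.isInvertible_of_injective {𝕜 E : Type*} [NontriviallyNormedField 𝕜]
    [CompleteSpace 𝕜] [NormedAddCommGroup E] [NormedSpace 𝕜 E] [FiniteDimensional 𝕜 E]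
    {f : E →L[𝕜] E} (hf : Injective f) : f.IsInvertible :=
  ⟨(LinearEquiv.ofInjectiveEndo (f : E →ₗ[𝕜] E) hf).toContinuousLinearEquiv, rfl⟩

theorem newton2_eq_of_hasFDerivAt {f : ℝ × ℝ → ℝ × ℝ} {L : (ℝ × ℝ) →L[ℝ] ℝ × ℝ} {z p : ℝ × ℝ}
    (hf : HasFDerivAt f L z) (hL : Injective L) (hp : L (z - p) = f z) : newton2 f z = p := by
  rw [newton2, hf.fderiv, (isInvertible_of_injective hL).inverse_apply_eq.2 hp.symm,
    sub_sub_cancel]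

noncomputable def quadJacobian (x y : ℝ) : (ℝ × ℝ) →L[ℝ] ℝ × ℝ :=
  (snd ℝ ℝ ℝ - (2 * x) • fst ℝ ℝ ℝ).prod (fst ℝ ℝ ℝ - (2 * y) • snd ℝ ℝ ℝ)

@[simp]
theorem quadJacobian_apply (x y : ℝ) (v : ℝ × ℝ) :
    quadJacobian x y v = (v.2 - 2 * x * v.1, v.1 - 2 * y * v.2) := by
  simp [quadJacobian, mul_assoc]

theorem hasFDerivAt_quadJacobian (z : ℝ × ℝ) :
    HasFDerivAt (fun w : ℝ × ℝ ↦ (w.2 - w.1 ^ 2, w.1 - w.2 ^ 2)) (quadJacobian z.1 z.2) z := by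
  have hfst : HasFDerivAt (Prod.fst : ℝ × ℝ → ℝ) (fst ℝ ℝ ℝ) z := hasFDerivAt_fst
  have hsnd : HasFDerivAt (Prod.snd : ℝ × ℝ → ℝ) (snd ℝ ℝ ℝ) z := hasFDerivAt_snd
  refine ((hsnd.sub (hfst.pow 2)).prodMk (hfst.sub (hsnd.pow 2))).congr_fderiv ?_
  ext <;> simp [quadJacobian]

theorem quadJacobian_injective {x y : ℝ} (h : 4 * x * y ≠ 1) : Injective (quadJacobian x y) := by
  rw [injective_iff_map_eq_zero]
  rintro ⟨a, b⟩ hv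
  obtain ⟨hb, ha⟩ := Prod.mk_eq_zero.1 ((quadJacobian_apply x y (a, b)).symm.trans hv)
  have ha0 : a = 0 := by
    have : a * (4 * x * y - 1) = 0 := by linear_combination -ha - 2 * y * hb
    exact (mul_eq_zero.1 this).resolve_right (sub_ne_zero.2 h)
  subst ha0
  simpa using hb

theorem sq_sub_eq_of_eq_add_neg_one_pow_mul_sqrt {a d x : ℝ} (k : ℕ) (hd : 0 ≤ d)
    (hx : x = a + (-1) ^ k * √d) : (x - a) ^ 2 = d := by
  simp [hx, mul_pow, ← pow_mul, hd]

/-- The four formal inverse branches `w_{m,n}` of the Newton map of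
`f(x,y) = (y − x², x − y²)`: whenever the square roots are real and the resulting point is
in the domain of the Newton map, the Newton map sends it back to `(x₀, y₀)`. -/
theorem stmt_13 (f : ℝ × ℝ → ℝ × ℝ)
    (hf : ∀ z : ℝ × ℝ, f z = (z.2 - z.1 ^ 2, z.1 - z.2 ^ 2))
    (x₀ y₀ : ℝ) (m n : Fin 2)
    (h1 : x₀ ^ 2 ≥ y₀) (h2 : y₀ ^ 2 ≥ x₀)
    (x y : ℝ)
    (hx : x = x₀ + (-1 : ℝ) ^ (m : ℕ) * Real.sqrt (x₀ ^ 2 - y₀))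
    (hy : y = y₀ + (-1 : ℝ) ^ (n : ℕ) * Real.sqrt (y₀ ^ 2 - x₀))
    (hd : 4 * x * y ≠ 1) :
    newton2 f (x, y) = (x₀, y₀) := by
  obtain rfl : f = fun z ↦ (z.2 - z.1 ^ 2, z.1 - z.2 ^ 2) := funext hf
  have hx₀ := sq_sub_eq_of_eq_add_neg_one_pow_mul_sqrt m (sub_nonneg.2 h1) hx
  have hy₀ := sq_sub_eq_of_eq_add_neg_one_pow_mul_sqrt n (sub_nonneg.2 h2) hy
  refine newton2_eq_of_hasFDerivAt (hasFDerivAt_quadJacobian (x, y)) (quadJacobian_injective hd) ?_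
  simp only [quadJacobian_apply, Prod.mk_sub_mk, Prod.mk.injEq]
  constructor
  · linear_combination -hx₀
  · linear_combination -hy₀
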